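/- arXiv:1312.6327 — 2 statements merged into one kernel-verified Lean document; each statement's English description precedes it below -/
import Mathlib

section
/- Let λ be a partition of n and let μ be a partition of n + j. If μ is not a subpartition of 1^j λ, then the partition 1μ (obtained from μ by adjoining one extra part equal to 1) is a partition of n + j + 1 that is not a subpartition of 1^{j+1} λ. -/
/-- `Subpartition μ ν` : `μ` is obtained from `ν` by merging (adding together)
groups of parts of `ν`. `P` is the grouping of the parts of `ν`. -/
def Subpartition (μ ν : Multiset ℕ) : Prop :=
  ∃ P : Multiset (Multiset ℕ), (∀ m ∈ P, m ≠ 0) ∧ P.join = ν ∧ P.map Multiset.sum = μ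

/-- `1^j λ` : the partition of `n + j` obtained from `λ` by adjoining `j` parts equal to `1`. -/
def onePow {n : ℕ} (j : ℕ) (lam : Nat.Partition n) : Nat.Partition (n + j) where
  parts := Multiset.replicate j 1 + lam.parts
  parts_pos := by
    intro i hi
    rcases Multiset.mem_add.1 hi with h | h
    · rw [Multiset.eq_of_mem_replicate h]; norm_num
    · exact lam.parts_pos h
  parts_sum := by
    rw [Multiset.sum_add, Multiset.sum_replicate, lam.parts_sum, smul_eq_mul, mul_one]
    omega

/-!
In a grouping of the parts of `1 ::ₘ ν` whose block sums are `1 ::ₘ μ`, some block sums to `1`;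
as all parts are positive, that block is `{1}`. Deleting it leaves a grouping of the parts of `ν`
whose block sums are `μ`.
-/

theorem Multiset.eq_singleton_one_of_sum_eq_one {m : Multiset ℕ} (hpos : ∀ a ∈ m, 0 < a)
    (hsum : m.sum = 1) : m = {1} := by
  obtain ⟨a, ha⟩ := Multiset.exists_mem_of_ne_zero (s := m) (by rintro rfl; simp at hsum)
  obtain ⟨m', rfl⟩ := Multiset.exists_cons_of_mem ha
  have ha_pos : 0 < a := hpos a (Multiset.mem_cons_self a m')
  rw [Multiset.sum_cons] at hsum
  have hm'_sum : m'.sum = 0 := by omega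
  have hm' : m' = 0 := Multiset.eq_zero_of_forall_notMem fun b hb =>
    (hpos b (Multiset.mem_cons_of_mem hb)).ne' (Multiset.sum_eq_zero_iff.1 hm'_sum b hb)
  rw [hm', show a = 1 by omega]
  rfl

theorem Subpartition.of_one_cons {μ ν : Multiset ℕ} (hν : ∀ a ∈ ν, 0 < a)
    (h : Subpartition (1 ::ₘ μ) (1 ::ₘ ν)) : Subpartition μ ν := by
  obtain ⟨P, hne, hjoin, hsums⟩ := h
  obtain ⟨m, hmP, hm_sum⟩ : ∃ m ∈ P, m.sum = 1 :=
    Multiset.mem_map.1 (hsums ▸ Multiset.mem_cons_self 1 μ)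
  have hm_pos : ∀ a ∈ m, 0 < a := by
    intro a ha
    have ha' : a ∈ 1 ::ₘ ν := hjoin ▸ Multiset.mem_join.2 ⟨m, hmP, ha⟩
    rcases Multiset.mem_cons.1 ha' with rfl | ha'
    exacts [Nat.one_pos, hν a ha']
  have hm : m = {1} := Multiset.eq_singleton_one_of_sum_eq_one hm_pos hm_sum
  obtain ⟨P', rfl⟩ := Multiset.exists_cons_of_mem hmP
  refine ⟨P', fun x hx => hne x (Multiset.mem_cons_of_mem hx), ?_, ?_⟩
  · rwa [Multiset.join_cons, hm, Multiset.singleton_add, Multiset.cons_inj_right] at hjoin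
  · rwa [Multiset.map_cons, hm_sum, Multiset.cons_inj_right] at hsums

theorem onePow_succ_parts {n : ℕ} (j : ℕ) (lam : Nat.Partition n) :
    (onePow (j + 1) lam).parts = 1 ::ₘ (onePow j lam).parts := by
  simp only [onePow, Multiset.replicate_succ, Multiset.cons_add]

/-- If `μ` is not a subpartition of `1^j λ`, then `1μ` is a partition of `n+j+1`
that is not a subpartition of `1^{j+1} λ`. -/
theorem stmt9 {n : ℕ} (lam : Nat.Partition n) (j : ℕ) (μ : Nat.Partition (n + j))
    (h : ¬ Subpartition μ.parts (onePow j lam).parts) :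
    (1 ::ₘ μ.parts).sum = n + j + 1 ∧ (∀ i ∈ (1 ::ₘ μ.parts), 0 < i) ∧
      ¬ Subpartition (1 ::ₘ μ.parts) (onePow (j + 1) lam).parts := by
  refine ⟨by rw [Multiset.sum_cons, μ.parts_sum, add_comm], ?_, ?_⟩
  · intro i hi
    rcases Multiset.mem_cons.1 hi with rfl | hi
    exacts [Nat.one_pos, μ.parts_pos hi]
  · rw [onePow_succ_parts]
    exact fun hsub => h (hsub.of_one_cons fun _ ha => (onePow j lam).parts_pos ha)
end

section
/- Let X be an n-dimensional topological manifold and λ a partition of n₀ with k parts. Then w_λ(X) ⊆ Sym^{n₀}(X) is a topological manifold of dimension k · dim(X). -/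
/-- Tuples indexed by `ι` up to permutation of the indices. For `ι = Fin n` this is
the `n`-th symmetric product `Sym^n X = X^n / Σ_n`. -/
def symSetoid (ι : Type*) (X : Type*) [TopologicalSpace X] : Setoid (ι → X) where
  r f g := ∃ σ : Equiv.Perm ι, f = g ∘ σ
  iseqv := by
    constructor
    · exact fun f => ⟨1, rfl⟩
    · rintro f g ⟨σ, hf⟩
      refine ⟨σ⁻¹, funext fun x => ?_⟩
      have := congrFun hf (σ⁻¹ x)
      simp only [Function.comp_apply, Equiv.Perm.inv_def, Equiv.apply_symm_apply] at this ⊢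
      exact this.symm
    · rintro f g h ⟨σ, hf⟩ ⟨τ, hg⟩
      refine ⟨σ.trans τ, funext fun x => ?_⟩
      have h1 := congrFun hf x
      have h2 := congrFun hg (σ x)
      simp only [Function.comp_apply, Equiv.coe_trans] at h1 h2 ⊢
      rw [h1, h2]

/-- The symmetric product of `X` with indexing set `ι` (for `ι = Fin n`, this is
`Sym^n X`), with the quotient topology. -/
def SymProd (ι : Type*) (X : Type*) [TopologicalSpace X] : Type _ :=
  Quotient (symSetoid ι X)

instance {ι X : Type*} [TopologicalSpace X] : TopologicalSpace (SymProd ι X) :=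
  instTopologicalSpaceQuotient

/-- The multiplicity type of a tuple `f : ι → X`: the multiset of the cardinalities
of the fibres of `f` over the points in its image. -/
noncomputable def multType {ι X : Type*} [Fintype ι] (f : ι → X) : Multiset ℕ := by
  classical
  exact (Finset.univ.image f).val.map fun x => (Finset.univ.filter fun i => f i = x).card

/-- `w_λ(X) ⊆ Sym^n X` : the subspace of the symmetric product consisting of the
points whose multiset of multiplicities is exactly `λ`. -/
noncomputable def wSet (X : Type*) [TopologicalSpace X] {n : ℕ} (lam : Nat.Partition n) :
    Set (SymProd (Fin n) X) :=
  {s | ∃ f : Fin n → X, Quotient.mk (symSetoid (Fin n) X) f = s ∧ multType f = lam.parts}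

/-!
Let `s = ⟦f⟧ ∈ w_λ(X)` and let `c` colour each coordinate of `f` by its value, so that
`f = x ∘ c` with `x` injective on the `k` colours. Separate the values `x i` by pairwise
disjoint open sets `U i`. Then `y ↦ ⟦y ∘ c⟧` is an open embedding of `∏ U i` into `w_λ(X)`:
a point of `w_λ(X)` that has a representative with each coordinate `j` in `U (c j)` has exactly
`k` distinct values, one in each `U i`, so it comes from a unique `y`. Composing the inverse
with product charts of `X` gives a chart into `ℝ^{k d}` around `s`.
-/

open Set Function Topology

section MultType

variable {ι X Y : Type*} [Fintype ι]

lemma multType_eq_map_count [DecidableEq X] (f : ι → X) :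
    multType f = (Multiset.map f Finset.univ.val).dedup.map
      fun x => (Multiset.map f Finset.univ.val).count x := by
  simp only [multType, Finset.image_val, Multiset.count_map, Finset.card, Finset.filter_val]
  congr! 3
  exact eq_comm

lemma multType_comp_of_injective {y : X → Y} (hy : Injective y) (f : ι → X) :
    multType (y ∘ f) = multType f := by
  classical
  rw [multType_eq_map_count, multType_eq_map_count, ← Multiset.map_map,
    Multiset.dedup_map_of_injective hy, Multiset.map_map]
  exact Multiset.map_congr rfl fun x _ => Multiset.count_map_eq_count' y _ hy x

lemma card_multType (f : ι → X) : Multiset.card (multType f) = Nat.card (range f) := by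
  classical
  rw [multType, Multiset.card_map, Nat.card_eq_card_toFinset, Set.toFinset_range]
  congr!

lemma multType_eq_of_mk_eq [TopologicalSpace X] {f g : ι → X}
    (h : Quotient.mk (symSetoid ι X) f = Quotient.mk _ g) : multType f = multType g := by
  classical
  obtain ⟨σ, rfl⟩ := Quotient.exact h
  rw [multType_eq_map_count, multType_eq_map_count, ← Multiset.map_map,
    Multiset.map_univ_val_equiv]

end MultType

lemma isOpenMap_mk_symSetoid {ι X : Type*} [TopologicalSpace X] :
    IsOpenMap (Quotient.mk (symSetoid ι X)) := by
  intro O hO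
  have hsat : Quotient.mk (symSetoid ι X) ⁻¹' (Quotient.mk (symSetoid ι X) '' O) =
      ⋃ σ : Equiv.Perm ι, (fun g : ι → X => g ∘ σ) ⁻¹' O := by
    ext g
    simp only [mem_preimage, mem_image, mem_iUnion]
    constructor
    · rintro ⟨g', hg', hq⟩
      obtain ⟨σ, rfl⟩ := Quotient.exact hq
      exact ⟨σ, hg'⟩
    · rintro ⟨σ, hσ⟩
      exact ⟨g ∘ σ, hσ, Quotient.sound ⟨σ, rfl⟩⟩
  rw [isOpen_coinduced]
  change IsOpen (Quotient.mk (symSetoid ι X) ⁻¹' _)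
  rw [hsat]
  exact isOpen_iUnion fun σ => hO.preimage (by fun_prop)

lemma exists_eq_comp_of_card_range_le {α β ι : Type*} [Finite α] {g : α → β} {c : α → ι}
    (hc : Surjective c) (hgc : ∀ a b, g a = g b → c a = c b)
    (hcard : Nat.card (range g) ≤ Nat.card ι) : ∃ y : ι → β, g = y ∘ c := by
  set c' : range g → ι := c ∘ rangeSplitting g
  have hc' : ∀ a, c' (rangeFactorization g a) = c a :=
    fun a => hgc _ _ (apply_rangeSplitting g _)
  have hbij : Bijective c' := by
    refine Surjective.bijective_of_nat_card_le (fun i => ?_) hcard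
    obtain ⟨a, rfl⟩ := hc i
    exact ⟨_, hc' a⟩
  refine ⟨fun i => ((Equiv.ofBijective c' hbij).symm i : β), funext fun a => ?_⟩
  rw [comp_apply, ← hc' a, Equiv.ofBijective_symm_apply_apply]
  rfl

lemma injective_of_mem_pi {ι X : Type*} {U : ι → Set X} (hU : Pairwise (Disjoint on U))
    {y : ι → X} (hy : y ∈ univ.pi U) : Injective y := fun i j hij =>
  by_contra fun hne => (hU hne).ne_of_mem (hy i trivial) (hy j trivial) hij

section LocalModel

variable {ι X : Type*} [TopologicalSpace X] {n : ℕ} {lam : Nat.Partition n}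
  {c : Fin n → ι} {U : ι → Set X}

lemma mk_comp_mem_wSet (hc : multType c = lam.parts) (hU : Pairwise (Disjoint on U))
    {y : ι → X} (hy : y ∈ univ.pi U) : Quotient.mk (symSetoid (Fin n) X) (y ∘ c) ∈ wSet X lam :=
  ⟨y ∘ c, rfl, (multType_comp_of_injective (injective_of_mem_pi hU hy) c).trans hc⟩

lemma image_pi_eq_inter_wSet (hc : multType c = lam.parts) (hcs : Surjective c)
    (hU : Pairwise (Disjoint on U)) :
    (fun y => Quotient.mk (symSetoid (Fin n) X) (y ∘ c)) '' univ.pi U =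
      Quotient.mk _ '' univ.pi (U ∘ c) ∩ wSet X lam := by
  ext t
  constructor
  · rintro ⟨y, hy, rfl⟩
    exact ⟨⟨y ∘ c, fun j _ => hy (c j) trivial, rfl⟩, mk_comp_mem_wSet hc hU hy⟩
  · rintro ⟨⟨g, hg, rfl⟩, g', hg', hg'lam⟩
    have hgc : ∀ a b, g a = g b → c a = c b := fun a b hab =>
      by_contra fun hne => (hU hne).ne_of_mem (hg a trivial) (hg b trivial) hab
    have hcard : Nat.card (range g) ≤ Nat.card ι := by
      rw [← card_multType, ← multType_eq_of_mk_eq hg', hg'lam, ← hc, card_multType,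
        range_eq_univ.2 hcs, Nat.card_univ]
    obtain ⟨y, rfl⟩ := exists_eq_comp_of_card_range_le hcs hgc hcard
    refine ⟨y, fun i _ => ?_, rfl⟩
    obtain ⟨j, rfl⟩ := hcs i
    exact hg j trivial

def piToWSet (hc : multType c = lam.parts) (hU : Pairwise (Disjoint on U)) :
    univ.pi U → wSet X lam :=
  fun y => ⟨Quotient.mk _ (y.1 ∘ c), mk_comp_mem_wSet hc hU y.2⟩

lemma image_piToWSet (hc : multType c = lam.parts) (hcs : Surjective c)
    (hU : Pairwise (Disjoint on U)) {W : ι → Set X} (hWU : ∀ i, W i ⊆ U i) :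
    piToWSet hc hU '' {y | y.1 ∈ univ.pi W} =
      Subtype.val ⁻¹' (Quotient.mk (symSetoid (Fin n) X) '' univ.pi (W ∘ c)) := by
  ext t
  constructor
  · rintro ⟨y, hy, rfl⟩
    exact ⟨y.1 ∘ c, fun j _ => hy (c j) trivial, rfl⟩
  · intro ht
    have hW : Pairwise (Disjoint on W) := fun i j hij => (hU hij).mono (hWU i) (hWU j)
    obtain ⟨y, hy, hyt⟩ : t.1 ∈ (fun y => Quotient.mk _ (y ∘ c)) '' univ.pi W := by
      rw [image_pi_eq_inter_wSet hc hcs hW]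
      exact ⟨ht, t.2⟩
    exact ⟨⟨y, fun i _ => hWU i (hy i trivial)⟩, hy, Subtype.ext hyt⟩

lemma isOpenEmbedding_piToWSet [Finite ι] (hc : multType c = lam.parts) (hcs : Surjective c)
    (hUo : ∀ i, IsOpen (U i)) (hU : Pairwise (Disjoint on U)) :
    IsOpenEmbedding (piToWSet hc hU) := by
  refine .of_continuous_injective_isOpenMap ?_ ?_ ?_
  · exact (continuous_quotient_mk'.comp ((continuous_pi fun j => continuous_apply (c j)).comp
      continuous_subtype_val)).subtype_mk _
  · rintro ⟨y, hy⟩ ⟨y', hy'⟩ h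
    obtain ⟨σ, hσ⟩ := Quotient.exact (congrArg Subtype.val h)
    refine Subtype.ext (funext fun i => ?_)
    obtain ⟨j, rfl⟩ := hcs i
    have hyj : y (c j) = y' (c (σ j)) := congrFun hσ j
    have hcσ : c (σ j) = c j := by_contra fun hne =>
      (hU hne).ne_of_mem (hy' _ trivial) (hy _ trivial) hyj.symm
    exact hyj.trans (congrArg y' hcσ)
  · intro O hO
    obtain ⟨O', hO', rfl⟩ := isOpen_induced_iff.1 hO
    refine isOpen_iff_forall_mem_open.2 ?_
    rintro _ ⟨y, hy, rfl⟩
    obtain ⟨V, hV, hVO⟩ := isOpen_pi_iff'.1 hO' y.1 hy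
    refine ⟨piToWSet hc hU '' {z | z.1 ∈ univ.pi fun i => V i ∩ U i},
      image_mono fun z hz => hVO fun i _ => (hz i trivial).1, ?_,
      mem_image_of_mem _ fun i _ => ⟨(hV i).2, y.2 i trivial⟩⟩
    rw [image_piToWSet hc hcs hU fun i => inter_subset_right]
    exact (isOpenMap_mk_symSetoid _ (isOpen_set_pi finite_univ fun j _ =>
      (hV (c j)).1.inter (hUo (c j)))).preimage continuous_subtype_val

end LocalModel

lemma Topology.IsOpenEmbedding.exists_openPartialHomeomorph_mem_source
    {H H' M N : Type*} [TopologicalSpace H] [TopologicalSpace H'] [TopologicalSpace M]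
    [TopologicalSpace N] [ChartedSpace H M] (φ : H ≃ₜ H') {f : M → N} (hf : IsOpenEmbedding f)
    (y : M) : ∃ e : OpenPartialHomeomorph N H', f y ∈ e.source := by
  have : Nonempty M := ⟨y⟩
  refine ⟨((hf.toOpenPartialHomeomorph f).symm.trans (chartAt H y)).trans
    φ.toOpenPartialHomeomorph, ?_⟩
  simp [hf.toOpenPartialHomeomorph_left_inv]

lemma ChartedSpace.nonempty_of_forall_exists_mem_source {H M : Type*} [TopologicalSpace H]
    [TopologicalSpace M] (h : ∀ x : M, ∃ e : OpenPartialHomeomorph M H, x ∈ e.source) :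
    Nonempty (ChartedSpace H M) := by
  choose e he using h
  exact ⟨⟨range e, e, he, mem_range_self⟩⟩

lemma nonempty_homeomorph_modelPi_euclideanSpace {ι : Type*} [Fintype ι] {d k : ℕ}
    (hk : Fintype.card ι = k) :
    Nonempty (ModelPi (fun _ : ι => EuclideanSpace ℝ (Fin d)) ≃ₜ
      EuclideanSpace ℝ (Fin (k * d))) :=
  ⟨(ContinuousLinearEquiv.ofFinrankEq (E := ι → EuclideanSpace ℝ (Fin d))
    (F := EuclideanSpace ℝ (Fin (k * d)))
    (by rw [Module.finrank_pi_fintype ℝ]; simp [hk])).toHomeomorph⟩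

lemma exists_openPartialHomeomorph_wSet_mem_source {X : Type*} [TopologicalSpace X]
    [T2Space X] {d : ℕ} [ChartedSpace (EuclideanSpace ℝ (Fin d)) X] {n : ℕ}
    (lam : Nat.Partition n) (s : wSet X lam) :
    ∃ e : OpenPartialHomeomorph (wSet X lam)
      (EuclideanSpace ℝ (Fin (Multiset.card lam.parts * d))), s ∈ e.source := by
  classical
  obtain ⟨_, f, rfl, hf⟩ := s
  obtain ⟨U, hUx, hU⟩ := (finite_range f).t2_separation
  have hUdisj : Pairwise (Disjoint on fun x : range f => U x) :=
    fun x y hxy => hU x.2 y.2 (Subtype.coe_ne_coe.2 hxy)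
  have hc : multType (rangeFactorization f) = lam.parts := by
    rwa [← multType_comp_of_injective Subtype.val_injective]
  have hemb := isOpenEmbedding_piToWSet hc rangeFactorization_surjective
    (fun x => (hUx x).2) hUdisj
  have hcard : Fintype.card (range f) = Multiset.card lam.parts := by
    rw [← hf, card_multType, Nat.card_eq_fintype_card]
  obtain ⟨φ⟩ := nonempty_homeomorph_modelPi_euclideanSpace (d := d) hcard
  let S : TopologicalSpace.Opens (range f → X) :=
    ⟨univ.pi fun x => U x, isOpen_set_pi finite_univ fun x _ => (hUx x).2⟩
  exact hemb.exists_openPartialHomeomorph_mem_source (M := S) φ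
    ⟨Subtype.val, fun x _ => (hUx x).1⟩

/-- If `X` is an `d`-dimensional topological manifold and `λ` is a partition of `n₀`
with `k` parts, then `w_λ(X) ⊆ Sym^{n₀} X` is a topological manifold of dimension
`k * d`. -/
theorem stmt12 (X : Type*) [TopologicalSpace X] [T2Space X] (d : ℕ)
    [ChartedSpace (EuclideanSpace ℝ (Fin d)) X] {n₀ : ℕ} (lam : Nat.Partition n₀)
    (k : ℕ) (hk : Multiset.card lam.parts = k) :
    Nonempty (ChartedSpace (EuclideanSpace ℝ (Fin (k * d))) ↥(wSet X lam)) := by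
  subst hk
  exact ChartedSpace.nonempty_of_forall_exists_mem_source
    (exists_openPartialHomeomorph_wSet_mem_source lam)
end
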